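/- Let G=(V,E) be a mixed graph and A, B, C disjoint subsets of V with V = an(A∪B∪C). Then A ⊥_m B | C in G if and only if there exist disjoint sets A* ⊇ A and B* ⊇ B with A* ∪ B* ∪ C = V and district(A* ∪ ch(A*)) ∩ district(B* ∪ ch(B*)) = ∅ in G. -/
import Mathlib


structure MixedGraph (V : Type*) where
  dir : V → V → Prop
  bi : V → V → Prop
  bi_symm : ∀ {a b : V}, bi a b → bi b a

namespace MixedGraph

variable {V : Type*}

/-- A single edge traversal: a directed edge traversed forwards (`a → b`),
a directed edge traversed backwards (`a ← b`), or a bi-directed edge (`a ↔ b`). -/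
inductive Step (G : MixedGraph V) : V → V → Type _
  | fwd {a b : V} : G.dir a b → G.Step a b
  | bwd {a b : V} : G.dir b a → G.Step a b
  | bi  {a b : V} : G.bi a b → G.Step a b

/-- The edge has an arrowhead at its second endpoint. -/
def Step.arrowAtEnd {G : MixedGraph V} : {a b : V} → G.Step a b → Prop
  | _, _, .fwd _ => True
  | _, _, .bwd _ => False
  | _, _, .bi _ => True

/-- The edge has an arrowhead at its first endpoint. -/
def Step.arrowAtStart {G : MixedGraph V} : {a b : V} → G.Step a b → Prop
  | _, _, .fwd _ => False
  | _, _, .bwd _ => True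
  | _, _, .bi _ => True

/-- Paths (possibly self-intersecting) in a mixed graph. -/
inductive Walk (G : MixedGraph V) : V → V → Type _
  | nil {a : V} : G.Walk a a
  | cons {a b c : V} : G.Step a b → G.Walk b c → G.Walk a c

namespace Walk

variable {G : MixedGraph V}

def length : {a b : V} → G.Walk a b → ℕ
  | _, _, .nil => 0
  | _, _, .cons _ w => w.length + 1

def verts : {a b : V} → G.Walk a b → List V
  | a, _, .nil => [a]
  | a, _, .cons _ w => a :: w.verts

/-- The intermediate vertices of a walk. -/
def interm {a b : V} (w : G.Walk a b) : List V := w.verts.tail.dropLast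

def append : {a b c : V} → G.Walk a b → G.Walk b c → G.Walk a c
  | _, _, _, .nil, w' => w'
  | _, _, _, .cons s w, w' => .cons s (w.append w')

/-- Every intermediate vertex of the walk is a collider. -/
def IsPureCollider : {a b : V} → G.Walk a b → Prop
  | _, _, .nil => True
  | _, _, .cons _ .nil => True
  | _, _, .cons s (.cons t w) =>
      s.arrowAtEnd ∧ t.arrowAtStart ∧ (Walk.cons t w).IsPureCollider

/-- The walk is m-connecting given `C`: every non-collider on it is outside `C`
and every collider on it is in `C`. -/
def IsMConnecting (C : Set V) : {a b : V} → G.Walk a b → Prop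
  | _, _, .nil => True
  | _, _, .cons _ .nil => True
  | _, _, .cons (b := m) s (.cons t w) =>
      ((s.arrowAtEnd ∧ t.arrowAtStart) ↔ m ∈ C) ∧ (Walk.cons t w).IsMConnecting C

end Walk

variable (G : MixedGraph V)

/-- `A` and `B` are m-separated given `C`: no m-connecting walk given `C`
between a vertex of `A` and a vertex of `B`. -/
def MSep (A B C : Set V) : Prop :=
  ∀ a ∈ A, ∀ b ∈ B, ∀ w : G.Walk a b, ¬ w.IsMConnecting C

/-- `u` and `v` are joined by a pure-collider path (with at least one edge). -/
def ColliderConn (u v : V) : Prop :=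
  ∃ w : G.Walk u v, 0 < w.length ∧ w.IsPureCollider

/-- Vertices connected to `S` by a (possibly empty) path of bi-directed edges. -/
def district (S : Set V) : Set V :=
  {v | ∃ s ∈ S, Relation.ReflTransGen G.bi s v}

/-- Children of vertices in `S`. -/
def ch (S : Set V) : Set V := {v | ∃ a ∈ S, G.dir a v}

/-- Ancestors of `S` (including `S` itself). -/
def an (S : Set V) : Set V :=
  {v | ∃ s ∈ S, Relation.ReflTransGen G.dir v s}

/-- The subgraph induced by `W`: edges with both endpoints in `W`. -/
def induce (W : Set V) : MixedGraph V where
  dir a b := G.dir a b ∧ a ∈ W ∧ b ∈ W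
  bi a b := G.bi a b ∧ a ∈ W ∧ b ∈ W
  bi_symm h := ⟨G.bi_symm h.1, h.2.2, h.2.1⟩

/-- Separation in an undirected graph with adjacency `adj`: every path between
`A` and `B` intersects `C`, i.e. `B` is not reachable from `A` avoiding `C`. -/
def UndirSep (adj : V → V → Prop) (A B C : Set V) : Prop :=
  ∀ a ∈ A, ∀ b ∈ B, ¬ Relation.ReflTransGen (fun x y => adj x y ∧ y ∉ C) a b

inductive EdgeKind | fwd | bwd | bi
deriving DecidableEq

def Step.kind {G : MixedGraph V} : {a b : V} → G.Step a b → EdgeKind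
  | _, _, .fwd _ => .fwd
  | _, _, .bwd _ => .bwd
  | _, _, .bi _ => .bi

def Walk.kinds {G : MixedGraph V} : {a b : V} → G.Walk a b → List EdgeKind
  | _, _, .nil => []
  | _, _, .cons s w => s.kind :: w.kinds

end MixedGraph


namespace MixedGraph

variable {V : Type*} {G : MixedGraph V}

/-! ### Step helper lemmas -/

theorem Step.arrow_em {u v : V} (t : G.Step u v) :
    (t.arrowAtEnd ∨ ¬ t.arrowAtEnd) ∧ (t.arrowAtStart ∨ ¬ t.arrowAtStart) := by
  cases t <;> constructor <;> simp [Step.arrowAtEnd, Step.arrowAtStart]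

theorem Step.bi_of_arrows {u v : V} {t : G.Step u v} (h1 : t.arrowAtStart) (h2 : t.arrowAtEnd) :
    G.bi u v := by
  cases t with
  | fwd h => exact h1.elim
  | bwd h => exact h2.elim
  | bi h => exact h

theorem Step.fwd_end {u v : V} {t : G.Step u v} (h : t.kind = .fwd) : t.arrowAtEnd := by
  cases t with
  | fwd _ => trivial
  | bwd _ => simp [Step.kind] at h
  | bi _ => simp [Step.kind] at h

theorem Step.fwd_start_false {u v : V} {t : G.Step u v} (h : t.kind = .fwd) :
    ¬ t.arrowAtStart := by
  cases t with
  | fwd _ => exact fun h' => h'.elim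
  | bwd _ => simp [Step.kind] at h
  | bi _ => simp [Step.kind] at h

theorem Step.bwd_start {u v : V} {t : G.Step u v} (h : t.kind = .bwd) : t.arrowAtStart := by
  cases t with
  | bwd _ => trivial
  | fwd _ => simp [Step.kind] at h
  | bi _ => simp [Step.kind] at h

theorem Step.bwd_end_false {u v : V} {t : G.Step u v} (h : t.kind = .bwd) :
    ¬ t.arrowAtEnd := by
  cases t with
  | bwd _ => exact fun h' => h'.elim
  | fwd _ => simp [Step.kind] at h
  | bi _ => simp [Step.kind] at h

theorem Step.bi_end {u v : V} {t : G.Step u v} (h : t.kind = .bi) : t.arrowAtEnd := by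
  cases t with
  | bi _ => trivial
  | fwd _ => simp [Step.kind] at h
  | bwd _ => simp [Step.kind] at h

theorem Step.bi_start {u v : V} {t : G.Step u v} (h : t.kind = .bi) : t.arrowAtStart := by
  cases t with
  | bi _ => trivial
  | fwd _ => simp [Step.kind] at h
  | bwd _ => simp [Step.kind] at h

theorem Step.bi_rel {u v : V} {t : G.Step u v} (h : t.kind = .bi) : G.bi u v := by
  cases t with
  | bi hb => exact hb
  | fwd _ => simp [Step.kind] at h
  | bwd _ => simp [Step.kind] at h

/-! ### Walk auxiliary definitions -/

namespace Walk

/-- Arrowhead at the end of the last step (`True` for the empty walk). -/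
def lastArrow : {a b : V} → G.Walk a b → Prop
  | _, _, .nil => True
  | _, _, .cons s .nil => s.arrowAtEnd
  | _, _, .cons _ (.cons t w) => (Walk.cons t w).lastArrow

/-- Arrowhead at the start of the first step (`True` for the empty walk). -/
def firstArrow : {a b : V} → G.Walk a b → Prop
  | _, _, .nil => True
  | _, _, .cons s _ => s.arrowAtStart

def AllFwd : {a b : V} → G.Walk a b → Prop
  | _, _, .nil => True
  | _, _, .cons s w => s.kind = .fwd ∧ w.AllFwd

def AllBwd : {a b : V} → G.Walk a b → Prop
  | _, _, .nil => True
  | _, _, .cons s w => s.kind = .bwd ∧ w.AllBwd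

def AllBi : {a b : V} → G.Walk a b → Prop
  | _, _, .nil => True
  | _, _, .cons s w => s.kind = .bi ∧ w.AllBi

/-- All vertices avoid `C`. -/
def AllAvoid (C : Set V) : {a b : V} → G.Walk a b → Prop
  | a, _, .nil => a ∉ C
  | a, _, .cons _ w => a ∉ C ∧ w.AllAvoid C

/-- All vertices except possibly the last avoid `C`. -/
def HeadAvoid (C : Set V) : {a b : V} → G.Walk a b → Prop
  | _, _, .nil => True
  | a, _, .cons _ w => a ∉ C ∧ w.HeadAvoid C

/-- All vertices except possibly the first avoid `C`. -/
def TailAvoid (C : Set V) : {a b : V} → G.Walk a b → Prop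
  | _, _, .nil => True
  | _, _, .cons _ w => w.AllAvoid C

/-! ### Basic walk lemmas -/

theorem length_append : ∀ {a b c : V} (p : G.Walk a b) (q : G.Walk b c),
    (p.append q).length = p.length + q.length
  | _, _, _, .nil, q => by simp [Walk.append, Walk.length]
  | _, _, _, .cons s w, q => by
      show (w.append q).length + 1 = (w.length + 1) + q.length
      rw [length_append w q]; omega

theorem eq_of_length_zero : ∀ {a b : V} (w : G.Walk a b), w.length = 0 → a = b
  | _, _, .nil, _ => rfl
  | _, _, .cons _ w, h => by simp [Walk.length] at h

theorem firstArrow_append_pos {a b c : V} {p : G.Walk a b} (hp : 0 < p.length)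
    {q : G.Walk b c} : (p.append q).firstArrow ↔ p.firstArrow := by
  cases p with
  | nil => simp [Walk.length] at hp
  | cons s w => exact Iff.rfl

theorem lastArrow_append : ∀ {a b c : V} (p : G.Walk a b) (q : G.Walk b c),
    0 < q.length → ((p.append q).lastArrow ↔ q.lastArrow)
  | _, _, _, .nil, q, _ => Iff.rfl
  | _, _, _, .cons s .nil, q, hq => by
      cases q with
      | nil => simp [Walk.length] at hq
      | cons t q' => exact Iff.rfl
  | _, _, _, .cons s (.cons u w), q, hq => lastArrow_append (.cons u w) q hq

theorem cond_first_append {a b c : V} (p : G.Walk a b) (q : G.Walk b c)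
    (hp : 0 < p.length → p.firstArrow) (hq : 0 < q.length → q.firstArrow) :
    0 < (p.append q).length → (p.append q).firstArrow := by
  cases p with
  | nil => exact hq
  | cons s w => exact fun _ => hp (Nat.succ_pos _)

theorem mconn_tail {C : Set V} {a m b : V} {t : G.Step a m} {w : G.Walk m b}
    (h : (Walk.cons t w).IsMConnecting C) : w.IsMConnecting C := by
  cases w with
  | nil => trivial
  | cons u w' => exact h.2

theorem append_mconn {C : Set V} : ∀ {a x b : V} (p : G.Walk a x) (q : G.Walk x b),
    p.IsMConnecting C → q.IsMConnecting C →
    (0 < p.length → 0 < q.length → ((p.lastArrow ∧ q.firstArrow) ↔ x ∈ C)) →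
    (p.append q).IsMConnecting C
  | _, _, _, .nil, q, _, hq, _ => hq
  | _, _, _, .cons s .nil, q, hp, hq, hj => by
      cases q with
      | nil => trivial
      | cons t q' =>
          exact ⟨hj Nat.one_pos (Nat.succ_pos _), hq⟩
  | _, _, _, .cons s (.cons u w), q, hp, hq, hj => by
      obtain ⟨hiff, hrest⟩ := hp
      exact ⟨hiff, append_mconn (.cons u w) q hrest hq (fun _ h2 => hj (Nat.succ_pos _) h2)⟩

theorem append_pure : ∀ {a x b : V} (p : G.Walk a x) (q : G.Walk x b),
    p.IsPureCollider → q.IsPureCollider →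
    (0 < p.length → 0 < q.length → (p.lastArrow ∧ q.firstArrow)) →
    (p.append q).IsPureCollider
  | _, _, _, .nil, q, _, hq, _ => hq
  | _, _, _, .cons s .nil, q, hp, hq, hj => by
      cases q with
      | nil => trivial
      | cons t q' =>
          obtain ⟨h1, h2⟩ := hj Nat.one_pos (Nat.succ_pos _)
          exact ⟨h1, h2, hq⟩
  | _, _, _, .cons s (.cons u w), q, hp, hq, hj => by
      obtain ⟨h1, h2, h3⟩ := hp
      exact ⟨h1, h2, append_pure (.cons u w) q h3 hq (fun _ hq' => hj (Nat.succ_pos _) hq')⟩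

/-! ### Lemmas about special chunk walks -/

theorem mconn_of_fwd {C : Set V} : ∀ {a b : V} (w : G.Walk a b),
    w.AllFwd → w.HeadAvoid C → w.IsMConnecting C
  | _, _, .nil, _, _ => trivial
  | _, _, .cons s .nil, _, _ => trivial
  | _, _, .cons s (.cons t w), hf, hh =>
      ⟨iff_of_false (fun hcol => Step.fwd_start_false hf.2.1 hcol.2) hh.2.1,
        mconn_of_fwd (.cons t w) hf.2 hh.2⟩

theorem mconn_of_bwd {C : Set V} : ∀ {a b : V} (w : G.Walk a b),
    w.AllBwd → w.TailAvoid C → w.IsMConnecting C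
  | _, _, .nil, _, _ => trivial
  | _, _, .cons s .nil, _, _ => trivial
  | _, _, .cons s (.cons t w), hb, ht =>
      ⟨iff_of_false (fun hcol => Step.bwd_end_false hb.1 hcol.1) ht.1,
        mconn_of_bwd (.cons t w) hb.2 ht.2⟩

theorem pure_of_bi : ∀ {a b : V} (w : G.Walk a b), w.AllBi → w.IsPureCollider
  | _, _, .nil, _ => trivial
  | _, _, .cons s .nil, _ => trivial
  | _, _, .cons s (.cons t w), hb =>
      ⟨Step.bi_end hb.1, Step.bi_start hb.2.1, pure_of_bi (.cons t w) hb.2⟩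

theorem fwd_lastArrow : ∀ {a b : V} (w : G.Walk a b), w.AllFwd → 0 < w.length → w.lastArrow
  | _, _, .nil, _, h => by simp [Walk.length] at h
  | _, _, .cons s .nil, hf, _ => Step.fwd_end hf.1
  | _, _, .cons s (.cons t w), hf, _ => fwd_lastArrow (.cons t w) hf.2 (Nat.succ_pos _)

theorem fwd_firstArrow_false {a b : V} (w : G.Walk a b) (hf : w.AllFwd) (hl : 0 < w.length) :
    ¬ w.firstArrow := by
  cases w with
  | nil => simp [Walk.length] at hl
  | cons s w' => exact Step.fwd_start_false hf.1

theorem bwd_firstArrow {a b : V} (w : G.Walk a b) (hb : w.AllBwd) (hl : 0 < w.length) :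
    w.firstArrow := by
  cases w with
  | nil => simp [Walk.length] at hl
  | cons s w' => exact Step.bwd_start hb.1

theorem bwd_lastArrow_false : ∀ {a b : V} (w : G.Walk a b), w.AllBwd → 0 < w.length →
    ¬ w.lastArrow
  | _, _, .nil, _, h => by simp [Walk.length] at h
  | _, _, .cons s .nil, hb, _ => Step.bwd_end_false hb.1
  | _, _, .cons s (.cons t w), hb, _ => bwd_lastArrow_false (.cons t w) hb.2 (Nat.succ_pos _)

theorem bi_firstArrow {a b : V} (w : G.Walk a b) (hb : w.AllBi) (hl : 0 < w.length) :
    w.firstArrow := by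
  cases w with
  | nil => simp [Walk.length] at hl
  | cons s w' => exact Step.bi_start hb.1

theorem bi_lastArrow : ∀ {a b : V} (w : G.Walk a b), w.AllBi → 0 < w.length → w.lastArrow
  | _, _, .nil, _, h => by simp [Walk.length] at h
  | _, _, .cons s .nil, hb, _ => Step.bi_end hb.1
  | _, _, .cons s (.cons t w), hb, _ => bi_lastArrow (.cons t w) hb.2 (Nat.succ_pos _)

theorem allBwd_append : ∀ {a b c : V} (p : G.Walk a b) (q : G.Walk b c),
    p.AllBwd → q.AllBwd → (p.append q).AllBwd
  | _, _, _, .nil, q, _, hq => hq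
  | _, _, _, .cons s w, q, hp, hq => ⟨hp.1, allBwd_append w q hp.2 hq⟩

theorem allAvoid_append {C : Set V} : ∀ {a b c : V} (p : G.Walk a b) (q : G.Walk b c),
    p.AllAvoid C → q.AllAvoid C → (p.append q).AllAvoid C
  | _, _, _, .nil, q, _, hq => hq
  | _, _, _, .cons s w, q, hp, hq => ⟨hp.1, allAvoid_append w q hp.2 hq⟩

theorem tailAvoid_of_allAvoid {C : Set V} {a b : V} (w : G.Walk a b) (h : w.AllAvoid C) :
    w.TailAvoid C := by
  cases w with
  | nil => trivial
  | cons s w' => exact h.2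

theorem headAvoid_of_allAvoid {C : Set V} : ∀ {a b : V} (w : G.Walk a b),
    w.AllAvoid C → w.HeadAvoid C
  | _, _, .nil, _ => trivial
  | _, _, .cons s w, h => ⟨h.1, headAvoid_of_allAvoid w h.2⟩

theorem tailAvoid_append {C : Set V} {a b c : V} (p : G.Walk a b) (q : G.Walk b c)
    (hp : p.TailAvoid C) (hq : q.AllAvoid C) : (p.append q).TailAvoid C := by
  cases p with
  | nil => exact tailAvoid_of_allAvoid q hq
  | cons s w => exact allAvoid_append w q hp hq

end Walk

/-! ### District and ancestor lemmas -/

theorem mem_district_self {S : Set V} {s : V} (hs : s ∈ S) : s ∈ G.district S :=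
  ⟨s, hs, Relation.ReflTransGen.refl⟩

theorem district_extend {S : Set V} {v v' : V} (h : v ∈ G.district S) (hb : G.bi v v') :
    v' ∈ G.district S := by
  obtain ⟨s, hs, hr⟩ := h
  exact ⟨s, hs, hr.tail hb⟩

theorem district_mono {S T : Set V} (h : S ⊆ T) : G.district S ⊆ G.district T := by
  rintro v ⟨s, hs, hr⟩
  exact ⟨s, h hs, hr⟩

theorem district_seed_mono {T : Set V} {v : V} (hv : v ∈ T) :
    G.district ({v} ∪ G.ch {v}) ⊆ G.district (T ∪ G.ch T) := by
  apply district_mono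
  rintro u (rfl | ⟨w, rfl, hd⟩)
  · exact Or.inl hv
  · exact Or.inr ⟨_, hv, hd⟩

theorem mem_district_union_elim {S : Set V} {z : V} (h : z ∈ G.district (S ∪ G.ch S)) :
    ∃ x ∈ S, z ∈ G.district ({x} ∪ G.ch {x}) := by
  obtain ⟨s, hs, hr⟩ := h
  rcases hs with hs | ⟨x, hx, hd⟩
  · exact ⟨s, hs, s, Or.inl rfl, hr⟩
  · exact ⟨x, hx, s, Or.inr ⟨x, rfl, hd⟩, hr⟩

theorem an_union {S T : Set V} : G.an (S ∪ T) = G.an S ∪ G.an T := by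
  ext v
  constructor
  · rintro ⟨s, hs | hs, hr⟩
    · exact Or.inl ⟨s, hs, hr⟩
    · exact Or.inr ⟨s, hs, hr⟩
  · rintro (⟨s, hs, hr⟩ | ⟨s, hs, hr⟩)
    · exact ⟨s, Or.inl hs, hr⟩
    · exact ⟨s, Or.inr hs, hr⟩

theorem rtg_bi_symm {u v : V} (h : Relation.ReflTransGen G.bi u v) :
    Relation.ReflTransGen G.bi v u := by
  induction h with
  | refl => exact Relation.ReflTransGen.refl
  | tail _ h ih => exact Relation.ReflTransGen.head (G.bi_symm h) ih

theorem mk_bi {u v : V} (h : Relation.ReflTransGen G.bi u v) :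
    ∃ w : G.Walk u v, w.AllBi := by
  induction h using Relation.ReflTransGen.head_induction_on with
  | refl => exact ⟨.nil, trivial⟩
  | head h' _ ih =>
      obtain ⟨w, hw⟩ := ih
      exact ⟨.cons (.bi h') w, rfl, hw⟩

/-! ### Collider connectedness vs districts -/

theorem cc_inner {x : V} : ∀ {m y : V} (w : G.Walk m y), w.IsPureCollider → w.firstArrow →
    m ∈ G.district ({x} ∪ G.ch {x}) →
    ∃ z, z ∈ G.district ({x} ∪ G.ch {x}) ∧ z ∈ G.district ({y} ∪ G.ch {y})
  | _, _, .nil, _, _, hm => ⟨_, hm, mem_district_self (Or.inl rfl)⟩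
  | _, _, .cons t .nil, _, hts, hm => by
      cases t with
      | fwd h => exact hts.elim
      | bwd h => exact ⟨_, hm, mem_district_self (Or.inr ⟨_, rfl, h⟩)⟩
      | bi h => exact ⟨_, hm, district_extend (mem_district_self (Or.inl rfl)) (G.bi_symm h)⟩
  | _, _, .cons t (.cons u w), hp, hts, hm => by
      obtain ⟨hte, hus, hp'⟩ := hp
      exact cc_inner (.cons u w) hp' hus (district_extend hm (Step.bi_of_arrows hts hte))

theorem cc_district {x y : V} (h : G.ColliderConn x y) :
    ∃ z, z ∈ G.district ({x} ∪ G.ch {x}) ∧ z ∈ G.district ({y} ∪ G.ch {y}) := by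
  obtain ⟨w, hpos, hpure⟩ := h
  cases w with
  | nil => simp [Walk.length] at hpos
  | cons s w' =>
    cases w' with
    | nil =>
      cases s with
      | fwd h =>
          exact ⟨y, mem_district_self (Or.inr ⟨x, rfl, h⟩), mem_district_self (Or.inl rfl)⟩
      | bwd h =>
          exact ⟨x, mem_district_self (Or.inl rfl), mem_district_self (Or.inr ⟨y, rfl, h⟩)⟩
      | bi h =>
          exact ⟨y, district_extend (mem_district_self (Or.inl rfl)) h,
            mem_district_self (Or.inl rfl)⟩
    | cons t w'' =>
      obtain ⟨hse, hts, hpure'⟩ := hpure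
      refine cc_inner (.cons t w'') hpure' hts ?_
      cases s with
      | fwd h => exact mem_district_self (Or.inr ⟨x, rfl, h⟩)
      | bwd h => exact hse.elim
      | bi h => exact district_extend (mem_district_self (Or.inl rfl)) h

theorem district_inter_cc {x y : V}
    (h : ∃ z, z ∈ G.district ({x} ∪ G.ch {x}) ∧ z ∈ G.district ({y} ∪ G.ch {y})) :
    x = y ∨ G.ColliderConn x y := by
  by_cases hxy : x = y
  · exact Or.inl hxy
  right
  obtain ⟨z, ⟨x', hx', hxz⟩, ⟨y', hy', hyz⟩⟩ := h
  obtain ⟨u2, hu2⟩ := mk_bi hxz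
  obtain ⟨u3, hu3⟩ := mk_bi (rtg_bi_symm hyz)
  have H1 : ∃ u1 : G.Walk x x', u1.IsPureCollider ∧ (0 < u1.length → u1.lastArrow) := by
    rcases hx' with rfl | ⟨x₀, rfl, hd⟩
    · exact ⟨.nil, trivial, fun h => absurd h (by simp [Walk.length])⟩
    · exact ⟨.cons (.fwd hd) .nil, trivial, fun _ => trivial⟩
  have H4 : ∃ u4 : G.Walk y' y, u4.IsPureCollider ∧ (0 < u4.length → u4.firstArrow) := by
    rcases hy' with rfl | ⟨y₀, rfl, hd⟩
    · exact ⟨.nil, trivial, fun h => absurd h (by simp [Walk.length])⟩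
    · exact ⟨.cons (.bwd hd) .nil, trivial, fun _ => trivial⟩
  obtain ⟨u1, hp1, hl1⟩ := H1
  obtain ⟨u4, hp4, hf4⟩ := H4
  have p34 : (u3.append u4).IsPureCollider :=
    Walk.append_pure u3 u4 (Walk.pure_of_bi u3 hu3) hp4
      (fun h3 h4 => ⟨Walk.bi_lastArrow u3 hu3 h3, hf4 h4⟩)
  have cf34 : 0 < (u3.append u4).length → (u3.append u4).firstArrow :=
    Walk.cond_first_append u3 u4 (fun h => Walk.bi_firstArrow u3 hu3 h) hf4
  have p234 : (u2.append (u3.append u4)).IsPureCollider :=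
    Walk.append_pure u2 _ (Walk.pure_of_bi u2 hu2) p34
      (fun h2 h34 => ⟨Walk.bi_lastArrow u2 hu2 h2, cf34 h34⟩)
  have cf234 : 0 < (u2.append (u3.append u4)).length → (u2.append (u3.append u4)).firstArrow :=
    Walk.cond_first_append u2 _ (fun h => Walk.bi_firstArrow u2 hu2 h) cf34
  have pw : (u1.append (u2.append (u3.append u4))).IsPureCollider :=
    Walk.append_pure u1 _ hp1 p234 (fun h1 h234 => ⟨hl1 h1, cf234 h234⟩)
  refine ⟨u1.append (u2.append (u3.append u4)), ?_, pw⟩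
  exact Nat.pos_of_ne_zero (fun h0 => hxy (Walk.eq_of_length_zero _ h0))

/-! ### From an m-connecting walk to a path in the augmented graph -/

theorem mconn_rtg_go {C : Set V} : ∀ {x b : V} (w : G.Walk x b), w.IsMConnecting C → b ∉ C →
    ∀ {a : V} (p : G.Walk a x), p.IsPureCollider →
    (x ∈ C → p.lastArrow ∧ w.firstArrow) →
    (0 < p.length ∨ (a = x ∧ x ∉ C)) →
    Relation.ReflTransGen (fun u v => G.ColliderConn u v ∧ v ∉ C) a b
  | _, _, .nil, _, hb, _, p, hp, _, hd => by
      rcases hd with hpos | ⟨rfl, _⟩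
      · exact Relation.ReflTransGen.single ⟨⟨p, hpos, hp⟩, hb⟩
      · exact Relation.ReflTransGen.refl
  | x, b, .cons t w', hw, hb, a, p, hp, hj, hd => by
      have hcol : ∀ {m : V} (t' : G.Step x m) (w'' : G.Walk m b),
          (Walk.cons t' w'').IsMConnecting C → m ∈ C →
          t'.arrowAtEnd ∧ w''.firstArrow := by
        intro m t' w'' hw'' hm
        cases w'' with
        | nil => exact absurd hm hb
        | cons u w₃ => exact hw''.1.mpr hm
      have hmt := Walk.mconn_tail hw
      by_cases hx : x ∈ C
      · obtain ⟨hla, hfa⟩ := hj hx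
        have hp' : (p.append (.cons t .nil)).IsPureCollider :=
          Walk.append_pure p (.cons t .nil) hp trivial (fun _ _ => ⟨hla, hfa⟩)
        have hlen' : 0 < (p.append (.cons t .nil)).length := by
          rw [Walk.length_append]; simp [Walk.length]
        refine mconn_rtg_go w' hmt hb _ hp' (fun hm => ?_) (Or.inl hlen')
        obtain ⟨hte, hfa'⟩ := hcol t w' hw hm
        exact ⟨(Walk.lastArrow_append p (.cons t .nil) (Nat.succ_pos _)).mpr hte, hfa'⟩
      · have pre : Relation.ReflTransGen (fun u v => G.ColliderConn u v ∧ v ∉ C) a x := by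
          rcases hd with hpos | ⟨rfl, _⟩
          · exact Relation.ReflTransGen.single ⟨⟨p, hpos, hp⟩, hx⟩
          · exact Relation.ReflTransGen.refl
        refine pre.trans (mconn_rtg_go w' hmt hb (.cons t .nil) trivial
          (fun hm => ?_) (Or.inl Nat.one_pos))
        exact hcol t w' hw hm

theorem mconn_to_rtg {C : Set V} {a b : V} (w : G.Walk a b) (hw : w.IsMConnecting C)
    (ha : a ∉ C) (hb : b ∉ C) :
    Relation.ReflTransGen (fun u v => G.ColliderConn u v ∧ v ∉ C) a b :=
  mconn_rtg_go w hw hb .nil trivial (fun hx => absurd hx ha) (Or.inr ⟨rfl, ha⟩)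

/-! ### Directed chunks from ancestrality -/

theorem exists_fwd_avoid {C : Set V} {x s : V} (hr : Relation.ReflTransGen G.dir x s)
    (hnc : x ∉ G.an C) : ∃ w : G.Walk x s, w.AllFwd ∧ w.AllAvoid C := by
  revert hnc
  induction hr using Relation.ReflTransGen.head_induction_on with
  | refl => exact fun h => ⟨.nil, trivial, fun hc => h ⟨s, hc, Relation.ReflTransGen.refl⟩⟩
  | @head x' x₁ h' hrest ih =>
      intro hx
      have hx₁ : x₁ ∉ G.an C := by
        rintro ⟨c, hc, hr'⟩
        exact hx ⟨c, hc, hr'.head h'⟩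
      obtain ⟨w, hf, hav⟩ := ih hx₁
      exact ⟨.cons (.fwd h') w, ⟨rfl, hf⟩,
        ⟨fun hc => hx ⟨x', hc, Relation.ReflTransGen.refl⟩, hav⟩⟩

theorem exists_bwd_avoid {C : Set V} {x s : V} (hr : Relation.ReflTransGen G.dir x s)
    (hnc : x ∉ G.an C) : ∃ w : G.Walk s x, w.AllBwd ∧ w.AllAvoid C := by
  revert hnc
  induction hr using Relation.ReflTransGen.head_induction_on with
  | refl => exact fun h => ⟨.nil, trivial, fun hc => h ⟨s, hc, Relation.ReflTransGen.refl⟩⟩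
  | @head x' x₁ h' hrest ih =>
      intro hx
      have hx₁ : x₁ ∉ G.an C := by
        rintro ⟨c, hc, hr'⟩
        exact hx ⟨c, hc, hr'.head h'⟩
      obtain ⟨w, hbw, hav⟩ := ih hx₁
      refine ⟨w.append (.cons (.bwd h') .nil), Walk.allBwd_append w _ hbw ⟨rfl, trivial⟩,
        Walk.allAvoid_append w _ hav ?_⟩
      exact ⟨fun hc => hx₁ ⟨x₁, hc, Relation.ReflTransGen.refl⟩,
        fun hc => hx ⟨x', hc, Relation.ReflTransGen.refl⟩⟩

theorem exists_detour {C : Set V} {x : V} (hx : x ∈ G.an C) (hxc : x ∉ C) :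
    ∃ c ∈ C, ∃ (w : G.Walk x c) (w' : G.Walk c x),
      w.AllFwd ∧ w.HeadAvoid C ∧ 0 < w.length ∧
      w'.AllBwd ∧ w'.TailAvoid C ∧ 0 < w'.length := by
  obtain ⟨c₀, hc₀, hr⟩ := hx
  revert hxc
  induction hr using Relation.ReflTransGen.head_induction_on with
  | refl => exact fun h => absurd hc₀ h
  | @head x' x₁ h' hrest ih =>
      intro hx'
      by_cases hx₁ : x₁ ∈ C
      · exact ⟨x₁, hx₁, .cons (.fwd h') .nil, .cons (.bwd h') .nil,
          ⟨rfl, trivial⟩, ⟨hx', trivial⟩, Nat.one_pos, ⟨rfl, trivial⟩, hx', Nat.one_pos⟩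
      · obtain ⟨c, hc, w1, w1', hfw, hha, hpo, hbw, hta, hpr⟩ := ih hx₁
        refine ⟨c, hc, .cons (.fwd h') w1, w1'.append (.cons (.bwd h') .nil),
          ⟨rfl, hfw⟩, ⟨hx', hha⟩, Nat.succ_pos _,
          Walk.allBwd_append w1' _ hbw ⟨rfl, trivial⟩,
          Walk.tailAvoid_append w1' _ hta ⟨hx₁, hx'⟩, ?_⟩
        rw [Walk.length_append]; omega

/-! ### The main walk-building loop -/

theorem innerLoop {C A B : Set V} (hanc : ∀ v : V, v ∈ G.an A ∪ G.an B ∪ G.an C) :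
    ∀ {x y : V} (Q : G.Walk x y), Q.IsPureCollider →
    ∀ {a' : V} (W : G.Walk a' x), a' ∈ A → W.IsMConnecting C →
    (W.lastArrow ∨ ¬ W.lastArrow ∨ W.length = 0) →
    (0 < Q.length → (x ∉ C ∨ (W.lastArrow ∧ Q.firstArrow))) →
    (∃ a₁ ∈ A, ∃ b₁ ∈ B, ∃ w : G.Walk a₁ b₁, w.IsMConnecting C) ∨
      (∃ a₁ ∈ A, ∃ W' : G.Walk a₁ y, W'.IsMConnecting C ∧
        (W'.lastArrow ∨ ¬ W'.lastArrow ∨ W'.length = 0)) := by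
  intro x y Q
  induction Q with
  | nil =>
      intro _ a' W ha hW hLK _
      exact Or.inr ⟨a', ha, W, hW, hLK⟩
  | @cons x m y t Q' ih =>
      intro hQ a' W ha hW hLK hInv
      have hQ' : Q'.IsPureCollider := by
        cases Q' with
        | nil => trivial
        | cons u Q'' => exact hQ.2.2
      have key : ∀ {a₂ : V} (W₁ : G.Walk a₂ x), a₂ ∈ A → W₁.IsMConnecting C →
          (0 < W₁.length → ((W₁.lastArrow ∧ t.arrowAtStart) ↔ x ∈ C)) →
          (∃ a₁ ∈ A, ∃ b₁ ∈ B, ∃ w : G.Walk a₁ b₁, w.IsMConnecting C) ∨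
            (∃ a₁ ∈ A, ∃ W' : G.Walk a₁ y, W'.IsMConnecting C ∧
              (W'.lastArrow ∨ ¬ W'.lastArrow ∨ W'.length = 0)) := by
        intro a₂ W₁ ha₂ hW₁ jg
        have hW₂ : (W₁.append (.cons t .nil)).IsMConnecting C :=
          Walk.append_mconn W₁ _ hW₁ trivial (fun h1 _ => jg h1)
        have hl₂ : (W₁.append (.cons t .nil)).lastArrow ↔ t.arrowAtEnd :=
          Walk.lastArrow_append W₁ (.cons t .nil) (Nat.succ_pos _)
        have hLK₂ : (W₁.append (.cons t .nil)).lastArrow ∨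
            ¬ (W₁.append (.cons t .nil)).lastArrow ∨
            (W₁.append (.cons t .nil)).length = 0 := by
          rcases (Step.arrow_em t).1 with h | h
          · exact Or.inl (hl₂.mpr h)
          · exact Or.inr (Or.inl (fun hh => h (hl₂.mp hh)))
        refine ih hQ' _ ha₂ hW₂ hLK₂ ?_
        intro hpos
        cases Q' with
        | nil => simp [Walk.length] at hpos
        | cons u Q'' => exact Or.inr ⟨hl₂.mpr hQ.1, hQ.2.1⟩
      by_cases hx : x ∈ C
      · rcases hInv (Nat.succ_pos _) with hxc | ⟨hWla, hQfa⟩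
        · exact absurd hx hxc
        · exact key W ha hW (fun _ => iff_of_true ⟨hWla, hQfa⟩ hx)
      · rcases (Step.arrow_em t).2 with hts | hts
        · rcases hLK with hWla | hWnla | hWlen
          · -- the junction is a collider outside C: fix it
            by_cases hanC : x ∈ G.an C
            · obtain ⟨c, hc, Do, Dr, hfw, hha, hpo, hbw, hta, hpr⟩ := exists_detour hanC hx
              have hDt : (Do.append Dr).IsMConnecting C :=
                Walk.append_mconn _ _ (Walk.mconn_of_fwd _ hfw hha)
                  (Walk.mconn_of_bwd _ hbw hta)
                  (fun _ _ => iff_of_true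
                    ⟨Walk.fwd_lastArrow _ hfw hpo, Walk.bwd_firstArrow _ hbw hpr⟩ hc)
              have hDtf : ¬ (Do.append Dr).firstArrow := by
                have h1 := Walk.firstArrow_append_pos hpo (q := Dr)
                exact fun h => Walk.fwd_firstArrow_false _ hfw hpo (h1.mp h)
              have hDtlen : 0 < (Do.append Dr).length := by
                rw [Walk.length_append]; omega
              have hW₁ : (W.append (Do.append Dr)).IsMConnecting C :=
                Walk.append_mconn _ _ hW hDt
                  (fun _ _ => iff_of_false (fun hcol => hDtf hcol.2) hx)
              have hW₁l : ¬ (W.append (Do.append Dr)).lastArrow := by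
                have h1 := Walk.lastArrow_append W _ hDtlen
                have h2 := Walk.lastArrow_append Do Dr hpr
                exact fun h => Walk.bwd_lastArrow_false _ hbw hpr (h2.mp (h1.mp h))
              exact key _ ha hW₁ (fun _ => iff_of_false (fun h => hW₁l h.1) hx)
            · by_cases hanA : x ∈ G.an A
              · obtain ⟨a₀, ha₀, hr⟩ := hanA
                obtain ⟨Drs, hbw, hav⟩ := exists_bwd_avoid hr hanC
                exact key Drs ha₀
                  (Walk.mconn_of_bwd _ hbw (Walk.tailAvoid_of_allAvoid _ hav))
                  (fun hpos => iff_of_false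
                    (fun h => Walk.bwd_lastArrow_false _ hbw hpos h.1) hx)
              · have hanB : x ∈ G.an B := by
                  rcases hanc x with (h | h) | h
                  · exact absurd h hanA
                  · exact h
                  · exact absurd h hanC
                obtain ⟨b₀, hb₀, hr⟩ := hanB
                obtain ⟨Dfin, hfw, hav⟩ := exists_fwd_avoid hr hanC
                refine Or.inl ⟨a', ha, b₀, hb₀, W.append Dfin, ?_⟩
                exact Walk.append_mconn _ _ hW
                  (Walk.mconn_of_fwd _ hfw (Walk.headAvoid_of_allAvoid _ hav))
                  (fun _ hq => iff_of_false
                    (fun h => Walk.fwd_firstArrow_false _ hfw hq h.2) hx)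
          · exact key W ha hW (fun _ => iff_of_false (fun h => hWnla h.1) hx)
          · exact key W ha hW (fun hpos => by omega)
        · exact key W ha hW (fun _ => iff_of_false (fun h => hts h.2) hx)

theorem buildWalk {C A B : Set V} (hanc : ∀ v : V, v ∈ G.an A ∪ G.an B ∪ G.an C)
    {a b : V} (h : Relation.ReflTransGen (fun u v => G.ColliderConn u v ∧ v ∉ C) a b)
    (ha : a ∈ A) (hac : a ∉ C) :
    (∃ a₁ ∈ A, ∃ b₁ ∈ B, ∃ w : G.Walk a₁ b₁, w.IsMConnecting C) ∨
      (∃ a₁ ∈ A, ∃ W : G.Walk a₁ b, W.IsMConnecting C) := by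
  have H : (∃ a₁ ∈ A, ∃ b₁ ∈ B, ∃ w : G.Walk a₁ b₁, w.IsMConnecting C) ∨
      (b ∉ C ∧ ∃ a₁ ∈ A, ∃ W : G.Walk a₁ b, W.IsMConnecting C ∧
        (W.lastArrow ∨ ¬ W.lastArrow ∨ W.length = 0)) := by
    induction h with
    | refl => exact Or.inr ⟨hac, a, ha, .nil, trivial, Or.inr (Or.inr rfl)⟩
    | tail hr hstep ih =>
        rcases ih with done | ⟨hvC, a₁, ha₁, W, hW, hLK⟩
        · exact Or.inl done
        · obtain ⟨P, hPpos, hPp⟩ := hstep.1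
          rcases innerLoop hanc P hPp W ha₁ hW hLK (fun _ => Or.inl hvC) with
            done | ⟨a₂, ha₂, W', hW', hLK'⟩
          · exact Or.inl done
          · exact Or.inr ⟨hstep.2, a₂, ha₂, W', hW', hLK'⟩
  rcases H with done | ⟨_, a₁, ha₁, W, hW, _⟩
  · exact Or.inl done
  · exact Or.inr ⟨a₁, ha₁, W, hW⟩

end MixedGraph

/-- For an ancestral full vertex set `V = an(A∪B∪C)`: `A ⊥_m B | C` iff there exist disjoint
`A* ⊇ A`, `B* ⊇ B` with `A* ∪ B* ∪ C = V` and disjoint districts of `A* ∪ ch(A*)` and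
`B* ∪ ch(B*)`. -/
theorem stmt_6 {V : Type*} (G : MixedGraph V) (A B C : Set V)
    (hAB : Disjoint A B) (hAC : Disjoint A C) (hBC : Disjoint B C)
    (hanc : G.an (A ∪ B ∪ C) = Set.univ) :
    G.MSep A B C ↔
      ∃ Astar Bstar : Set V, Disjoint Astar Bstar ∧ A ⊆ Astar ∧ B ⊆ Bstar ∧
        Astar ∪ Bstar ∪ C = Set.univ ∧
        G.district (Astar ∪ G.ch Astar) ∩ G.district (Bstar ∪ G.ch Bstar) = ∅ := by
  have hanc' : ∀ v : V, v ∈ G.an A ∪ G.an B ∪ G.an C := by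
    intro v
    have hv : v ∈ G.an (A ∪ B ∪ C) := by rw [hanc]; trivial
    rwa [MixedGraph.an_union, MixedGraph.an_union] at hv
  constructor
  · intro hsep
    set As : Set V :=
      {v | ∃ a ∈ A, Relation.ReflTransGen (fun u w => G.ColliderConn u w ∧ w ∉ C) a v}
      with hAsdef
    refine ⟨As, {v | v ∉ C ∧ v ∉ As}, ?_, ?_, ?_, ?_, ?_⟩
    · exact Set.disjoint_left.mpr (fun {v} hva hvb => hvb.2 hva)
    · exact fun a ha => ⟨a, ha, Relation.ReflTransGen.refl⟩
    · intro b hb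
      refine ⟨Set.disjoint_left.mp hBC hb, ?_⟩
      rintro ⟨a₀, ha₀, hr⟩
      rcases MixedGraph.buildWalk hanc' hr ha₀ (Set.disjoint_left.mp hAC ha₀) with
        ⟨a₁, ha₁, b₁, hb₁, w, hw⟩ | ⟨a₁, ha₁, W, hW⟩
      · exact hsep a₁ ha₁ b₁ hb₁ w hw
      · exact hsep a₁ ha₁ b hb W hW
    · apply Set.eq_univ_of_forall
      intro v
      by_cases h1 : v ∈ As
      · exact Or.inl (Or.inl h1)
      · by_cases h2 : v ∈ C
        · exact Or.inr h2
        · exact Or.inl (Or.inr ⟨h2, h1⟩)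
    · rw [Set.eq_empty_iff_forall_notMem]
      rintro z ⟨hz1, hz2⟩
      obtain ⟨x, hx, hzx⟩ := MixedGraph.mem_district_union_elim hz1
      obtain ⟨y, hy, hzy⟩ := MixedGraph.mem_district_union_elim hz2
      rcases MixedGraph.district_inter_cc ⟨z, hzx, hzy⟩ with rfl | hcc
      · exact hy.2 hx
      · obtain ⟨a₀, ha₀, hr⟩ := hx
        exact hy.2 ⟨a₀, ha₀, hr.tail ⟨hcc, hy.1⟩⟩
  · rintro ⟨As, Bs, hdisj, hA, hB, huniv, hdist⟩ a ha b hb w hw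
    rw [Set.eq_empty_iff_forall_notMem] at hdist
    have hrtg := MixedGraph.mconn_to_rtg w hw (Set.disjoint_left.mp hAC ha)
      (Set.disjoint_left.mp hBC hb)
    have hclaim : ∀ v, Relation.ReflTransGen (fun u w => G.ColliderConn u w ∧ w ∉ C) a v →
        v ∈ As := by
      intro v hr
      induction hr with
      | refl => exact hA ha
      | @tail v v' hr hR ih =>
          have hv' : v' ∈ As ∪ Bs ∪ C := by rw [huniv]; trivial
          rcases hv' with (h | h) | h
          · exact h
          · obtain ⟨z, hzv, hzv'⟩ := MixedGraph.cc_district hR.1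
            exact absurd ⟨MixedGraph.district_seed_mono ih hzv,
              MixedGraph.district_seed_mono h hzv'⟩ (hdist z)
          · exact absurd h hR.2
    exact Set.disjoint_left.mp hdisj (hclaim b hrtg) (hB hb)
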